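/- For every m, n ∈ ℕ and every I ∈ 𝕊, the function g : ℝ² → ℍ defined by g(x,y) = e^{−(x²+y²)}·(x+Iy)^m is smooth and satisfies the Rodrigues-type formula (−1)^n · e^{x²+y²} · ((∂_I)^n g)(x,y) = H^Q_{m,n}(x+Iy, x−Iy) for all (x,y) ∈ ℝ², where ∂_I h := (1/2)(∂h/∂x − I·(∂h/∂y)) with I multiplying on the left. -/

import Mathlib

open scoped Quaternion
open MeasureTheory

noncomputable section

/-- The slice derivative `∂_I h = (1/2)(∂h/∂x − I·∂h/∂y)` for `h : ℝ² → ℍ`,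
with `I` multiplying on the left. -/
def dop (I : ℍ[ℝ]) (g : ℝ × ℝ → ℍ[ℝ]) : ℝ × ℝ → ℍ[ℝ] :=
  fun p => (1/2 : ℝ) • (fderiv ℝ g p (1, 0) - I * fderiv ℝ g p (0, 1))

/-- The quaternionic Hermite polynomial
`H^Q_{m,n}(q,q̄) = m!n! ∑_{j=0}^{min(m,n)} ((−1)^j/j!) q^{m−j} q̄^{n−j}/((m−j)!(n−j)!)`,
as a function of the two (commuting) arguments `q` and `q̄`. -/
def HQ (m n : ℕ) (q qb : ℍ[ℝ]) : ℍ[ℝ] :=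
  ((m.factorial : ℝ) * (n.factorial : ℝ)) •
    ∑ j ∈ Finset.range (min m n + 1),
      ((-1 : ℝ) ^ j / ((j.factorial : ℝ) * ((m - j).factorial : ℝ) * ((n - j).factorial : ℝ))) •
        (q ^ (m - j) * qb ^ (n - j))

/-! The real subalgebra of `ℍ` generated by `I` is a copy of `ℂ` (`Complex.liftAux I hI`), and
`∂_I` commutes with this embedding, so the computation takes place in `ℂ`, where `∂_I` becomes the
Wirtinger derivative `∂_z`. With `z = x + iy`, the product and chain rules give
`∂_z (e^{-z z̄} z^a z̄^b) = a e^{-z z̄} z^{a-1} z̄^b - e^{-z z̄} z^a z̄^{b+1}`, and induction on `n` gives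
`∂_z^n (e^{-z z̄} z^m) = ∑_j (-1)^{n+j} C(m,j) n!/(n-j)! e^{-z z̄} z^{m-j} z̄^{n-j}`.
Multiplying by `(-1)^n e^{z z̄}` leaves exactly the coefficients of `H^Q_{m,n}`. -/

open scoped ContDiff

section SliceDeriv

variable {A B : Type*} [NormedRing A] [NormedAlgebra ℝ A] [NormedRing B] [NormedAlgebra ℝ B]
  {I : A} {f g : ℝ × ℝ → A} {p : ℝ × ℝ}

variable (I) in
def sliceDeriv (g : ℝ × ℝ → A) (p : ℝ × ℝ) : A :=
  (1/2 : ℝ) • (fderiv ℝ g p (1, 0) - I * fderiv ℝ g p (0, 1))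

theorem dop_eq_sliceDeriv (I : ℍ[ℝ]) : dop I = sliceDeriv I := rfl

theorem HasFDerivAt.sliceDeriv_eq {g' : ℝ × ℝ →L[ℝ] A} (hg : HasFDerivAt g g' p) :
    sliceDeriv I g p = (1/2 : ℝ) • (g' (1, 0) - I * g' (0, 1)) := by
  rw [sliceDeriv, hg.fderiv]

theorem sliceDeriv_sum {ι : Type*} (s : Finset ι) {f : ι → ℝ × ℝ → A}
    (hf : ∀ i ∈ s, DifferentiableAt ℝ (f i) p) :
    sliceDeriv I (fun q => ∑ i ∈ s, f i q) p = ∑ i ∈ s, sliceDeriv I (f i) p := by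
  simp only [sliceDeriv, fderiv_fun_sum hf, _root_.sum_apply, Finset.mul_sum,
    ← Finset.sum_sub_distrib, Finset.smul_sum]

theorem sliceDeriv_const_smul (c : ℝ) (hf : DifferentiableAt ℝ f p) :
    sliceDeriv I (fun q => c • f q) p = c • sliceDeriv I f p := by
  simp only [sliceDeriv, fderiv_fun_const_smul hf, _root_.smul_apply, mul_smul_comm,
    ← smul_sub, smul_comm c]

theorem sliceDeriv_algHom_comp [FiniteDimensional ℝ A] (φ : A →ₐ[ℝ] B)
    (hf : DifferentiableAt ℝ f p) :
    sliceDeriv (φ I) (fun q => φ (f q)) p = φ (sliceDeriv I f p) := by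
  let φL : A →L[ℝ] B := LinearMap.toContinuousLinearMap φ.toLinearMap
  have hφf : HasFDerivAt (fun q => φ (f q)) (φL.comp (fderiv ℝ f p)) p :=
    φL.hasFDerivAt.comp p hf.hasFDerivAt
  rw [hφf.sliceDeriv_eq, sliceDeriv, map_smul, map_sub, map_mul]
  rfl

theorem ContDiff.sliceDeriv {m n : WithTop ℕ∞} (hg : ContDiff ℝ n g) (hmn : m + 1 ≤ n) :
    ContDiff ℝ m (sliceDeriv I g) := by
  have hDg : ContDiff ℝ m (fderiv ℝ g) := hg.fderiv_right hmn
  unfold _root_.sliceDeriv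
  exact ((hDg.clm_apply contDiff_const).sub
    (contDiff_const.mul (hDg.clm_apply contDiff_const))).const_smul _

theorem iterate_sliceDeriv_algHom_comp [FiniteDimensional ℝ A] (φ : A →ₐ[ℝ] B) (n : ℕ)
    (hf : ContDiff ℝ ∞ f) :
    (sliceDeriv (φ I))^[n] (fun q => φ (f q)) = fun q => φ ((sliceDeriv I)^[n] f q) := by
  induction n generalizing f with
  | zero => rfl
  | succ n ih =>
    have hcomm : sliceDeriv (φ I) (fun q => φ (f q)) = fun q => φ (sliceDeriv I f q) :=
      funext fun q => sliceDeriv_algHom_comp φ ((hf.differentiable (by simp)) q)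
    rw [Function.iterate_succ_apply, Function.iterate_succ_apply, hcomm,
      ih (hf.sliceDeriv (by simp))]

end SliceDeriv

section Commutative

variable {A : Type*} [NormedCommRing A] [NormedAlgebra ℝ A] {I : A} {f g : ℝ × ℝ → A} {p : ℝ × ℝ}

theorem sliceDeriv_mul (hf : DifferentiableAt ℝ f p) (hg : DifferentiableAt ℝ g p) :
    sliceDeriv I (fun q => f q * g q) p = sliceDeriv I f p * g p + f p * sliceDeriv I g p := by
  have hfg : HasFDerivAt (fun q => f q * g q) _ p := hf.hasFDerivAt.mul hg.hasFDerivAt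
  rw [hfg.sliceDeriv_eq, sliceDeriv, sliceDeriv]
  simp only [_root_.add_apply, _root_.smul_apply, smul_eq_mul, Algebra.smul_def]
  ring

end Commutative

theorem sliceDeriv_comp {𝕜 : Type*} [NontriviallyNormedField 𝕜] [NormedAlgebra ℝ 𝕜] {I : 𝕜}
    {f : ℝ × ℝ → 𝕜} {p : ℝ × ℝ} {h : 𝕜 → 𝕜} {h' : 𝕜} (hh : HasDerivAt h h' (f p))
    (hf : DifferentiableAt ℝ f p) :
    sliceDeriv I (fun q => h (f q)) p = h' * sliceDeriv I f p := by
  have hhf : HasFDerivAt (fun q => h (f q)) _ p := hh.comp_hasFDerivAt p hf.hasFDerivAt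
  rw [hhf.sliceDeriv_eq, sliceDeriv]
  simp only [_root_.smul_apply, smul_eq_mul, Algebra.smul_def]
  ring

theorem Nat.choose_succ_mul_succ_descFactorial_succ (m n k : ℕ) :
    m.choose (k + 1) * (n + 1).descFactorial (k + 1) =
      (m - k) * (m.choose k * n.descFactorial k) + m.choose (k + 1) * n.descFactorial (k + 1) := by
  rw [Nat.succ_descFactorial_succ, Nat.descFactorial_succ]
  rcases le_or_gt k n with hkn | hnk
  · have hpascal : m.choose (k + 1) * (k + 1) = m.choose k * (m - k) :=
      Nat.choose_succ_right_eq m k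
    calc m.choose (k + 1) * ((n + 1) * n.descFactorial k)
        = m.choose (k + 1) * (k + 1) * n.descFactorial k
            + m.choose (k + 1) * ((n - k) * n.descFactorial k) := by
          rw [show n + 1 = (k + 1) + (n - k) by omega]; ring
      _ = _ := by rw [hpascal]; ring
  · simp [Nat.descFactorial_eq_zero_iff_lt.mpr hnk]

namespace QuaternionHermite

open Complex

variable {p : ℝ × ℝ}

def zCoord : ℝ × ℝ →L[ℝ] ℂ :=
  ofRealCLM.comp (.fst ℝ ℝ ℝ) + I • ofRealCLM.comp (.snd ℝ ℝ ℝ)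

def zbarCoord : ℝ × ℝ →L[ℝ] ℂ :=
  ofRealCLM.comp (.fst ℝ ℝ ℝ) - I • ofRealCLM.comp (.snd ℝ ℝ ℝ)

@[simp] theorem zCoord_apply : zCoord p = p.1 + I * p.2 := rfl

@[simp] theorem zbarCoord_apply : zbarCoord p = p.1 - I * p.2 := rfl

theorem sliceDeriv_zCoord : sliceDeriv I zCoord p = 1 := by
  rw [zCoord.hasFDerivAt.sliceDeriv_eq]
  norm_num

theorem sliceDeriv_zbarCoord : sliceDeriv I zbarCoord p = 0 := by
  rw [zbarCoord.hasFDerivAt.sliceDeriv_eq]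
  simp

def gaussian (p : ℝ × ℝ) : ℂ := exp (-(zCoord p * zbarCoord p))

def gaussMonomial (a b : ℕ) (p : ℝ × ℝ) : ℂ := gaussian p * zCoord p ^ a * zbarCoord p ^ b

theorem gaussian_eq_ofReal : gaussian p = (Real.exp (-(p.1 ^ 2 + p.2 ^ 2)) : ℂ) := by
  have hnorm : zCoord p * zbarCoord p = ((p.1 ^ 2 + p.2 ^ 2 : ℝ) : ℂ) := by
    simp only [zCoord_apply, zbarCoord_apply]
    push_cast
    linear_combination (-(p.2 : ℂ) ^ 2) * I_sq
  rw [gaussian, hnorm, ← ofReal_neg, ← ofReal_exp]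

theorem contDiff_gaussian : ContDiff ℝ ∞ gaussian :=
  (zCoord.contDiff.mul zbarCoord.contDiff).neg.cexp

theorem contDiff_gaussMonomial (a b : ℕ) : ContDiff ℝ ∞ (gaussMonomial a b) :=
  (contDiff_gaussian.mul (zCoord.contDiff.pow a)).mul (zbarCoord.contDiff.pow b)

theorem sliceDeriv_gaussian : sliceDeriv I gaussian p = -zbarCoord p * gaussian p := by
  have hexp := (hasDerivAt_neg (zCoord p * zbarCoord p)).cexp
  change sliceDeriv I (fun q => exp (-(zCoord q * zbarCoord q))) p = _
  rw [sliceDeriv_comp (f := fun q => zCoord q * zbarCoord q) hexp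
    (zCoord.differentiableAt.mul zbarCoord.differentiableAt),
    sliceDeriv_mul zCoord.differentiableAt zbarCoord.differentiableAt, sliceDeriv_zCoord,
    sliceDeriv_zbarCoord]
  rw [gaussian]
  ring

theorem sliceDeriv_gaussMonomial (a b : ℕ) :
    sliceDeriv I (gaussMonomial a b) p =
      a * gaussMonomial (a - 1) b p - gaussMonomial a (b + 1) p := by
  have hgauss : DifferentiableAt ℝ gaussian p :=
    contDiff_gaussian.differentiable (by simp) p
  have hza : DifferentiableAt ℝ (fun q => zCoord q ^ a) p := zCoord.differentiableAt.pow a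
  have hzb : DifferentiableAt ℝ (fun q => zbarCoord q ^ b) p := zbarCoord.differentiableAt.pow b
  change sliceDeriv I (fun q => gaussian q * zCoord q ^ a * zbarCoord q ^ b) p = _
  rw [sliceDeriv_mul (f := fun q => gaussian q * zCoord q ^ a) (hgauss.mul hza) hzb,
    sliceDeriv_mul hgauss hza,
    sliceDeriv_comp (f := zCoord) (hasDerivAt_pow a _) zCoord.differentiableAt,
    sliceDeriv_comp (f := zbarCoord) (hasDerivAt_pow b _) zbarCoord.differentiableAt,
    sliceDeriv_gaussian, sliceDeriv_zCoord, sliceDeriv_zbarCoord]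
  simp only [gaussMonomial]
  ring

theorem exp_smul_gaussMonomial (a b : ℕ) :
    Real.exp (p.1 ^ 2 + p.2 ^ 2) • gaussMonomial a b p = zCoord p ^ a * zbarCoord p ^ b := by
  rw [gaussMonomial, gaussian_eq_ofReal, real_smul, ← mul_assoc, ← mul_assoc, ← ofReal_mul,
    ← Real.exp_add, add_neg_cancel, Real.exp_zero, ofReal_one, one_mul]

def rodriguesCoeff (m n j : ℕ) : ℝ := (-1) ^ (n + j) * (m.choose j * n.descFactorial j : ℕ)

theorem rodriguesCoeff_succ_zero (m n : ℕ) :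
    rodriguesCoeff m (n + 1) 0 = -rodriguesCoeff m n 0 := by
  simp [rodriguesCoeff, pow_succ]

theorem rodriguesCoeff_succ_succ (m n k : ℕ) :
    rodriguesCoeff m (n + 1) (k + 1) =
      (m - k : ℕ) * rodriguesCoeff m n k - rodriguesCoeff m n (k + 1) := by
  have h : ((m.choose (k + 1) * (n + 1).descFactorial (k + 1) : ℕ) : ℝ) =
      (m - k : ℕ) * (m.choose k * n.descFactorial k : ℕ)
        + (m.choose (k + 1) * n.descFactorial (k + 1) : ℕ) := by
    exact_mod_cast Nat.choose_succ_mul_succ_descFactorial_succ m n k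
  simp only [rodriguesCoeff, h]
  rw [show n + 1 + (k + 1) = n + k + 2 by ring, show n + (k + 1) = n + k + 1 by ring]
  ring

theorem rodriguesCoeff_of_lt_right {m n j : ℕ} (h : n < j) : rodriguesCoeff m n j = 0 := by
  simp [rodriguesCoeff, Nat.descFactorial_eq_zero_iff_lt.mpr h]

theorem rodriguesCoeff_of_lt_left {m n j : ℕ} (h : m < j) : rodriguesCoeff m n j = 0 := by
  simp [rodriguesCoeff, Nat.choose_eq_zero_of_lt h]

theorem neg_one_pow_mul_rodriguesCoeff {m n j : ℕ} (hjm : j ≤ m) (hjn : j ≤ n) :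
    (-1) ^ n * rodriguesCoeff m n j =
      (m.factorial * n.factorial : ℝ) *
        ((-1) ^ j / (j.factorial * (m - j).factorial * (n - j).factorial)) := by
  have hdesc : ((n - j).factorial : ℝ) * n.descFactorial j = n.factorial := by
    exact_mod_cast Nat.factorial_mul_descFactorial hjn
  rw [rodriguesCoeff, Nat.cast_mul, Nat.cast_choose ℝ hjm, ← hdesc, pow_add]
  field_simp
  rw [← pow_mul, mul_comm n, pow_mul, neg_one_sq, one_pow, one_mul]

def rodriguesSum (m n : ℕ) (p : ℝ × ℝ) : ℂ :=
  ∑ j ∈ Finset.range (n + 1), rodriguesCoeff m n j • gaussMonomial (m - j) (n - j) p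

theorem sliceDeriv_rodriguesSum (m n : ℕ) (p : ℝ × ℝ) :
    sliceDeriv I (rodriguesSum m n) p = rodriguesSum m (n + 1) p := by
  set T : ℕ → ℂ := fun j => gaussMonomial (m - j) (n + 1 - j) p
  -- differentiating `z^{m-j}` moves a term to index `j + 1`, the factor `-z̄` keeps it at `j`
  have hderiv : sliceDeriv I (rodriguesSum m n) p =
      ∑ j ∈ Finset.range (n + 1), ((m - j : ℕ) * rodriguesCoeff m n j) • T (j + 1)
        - ∑ j ∈ Finset.range (n + 1), rodriguesCoeff m n j • T j := by
    have hdiff (a b : ℕ) : Differentiable ℝ (gaussMonomial a b) :=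
      (contDiff_gaussMonomial a b).differentiable (by simp)
    unfold rodriguesSum
    rw [sliceDeriv_sum (f := fun j q => rodriguesCoeff m n j • gaussMonomial (m - j) (n - j) q) _
        fun j _ => (hdiff (m - j) (n - j) p).const_smul (rodriguesCoeff m n j),
      ← Finset.sum_sub_distrib]
    refine Finset.sum_congr rfl fun j hj => ?_
    have hjn : j ≤ n := Nat.lt_succ_iff.mp (Finset.mem_range.mp hj)
    rw [sliceDeriv_const_smul _ (hdiff _ _ p), sliceDeriv_gaussMonomial, smul_sub, mul_smul,
      smul_comm ((m - j : ℕ) : ℝ),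
      show m - j - 1 = m - (j + 1) by omega, show n - j + 1 = n + 1 - j by omega,
      show n - j = n + 1 - (j + 1) by omega, ← ofReal_natCast, ← real_smul]
  have hshift : ∑ j ∈ Finset.range (n + 1), rodriguesCoeff m n (j + 1) • T (j + 1) =
      ∑ j ∈ Finset.range (n + 1), rodriguesCoeff m n j • T j - rodriguesCoeff m n 0 • T 0 := by
    rw [eq_sub_iff_add_eq, ← Finset.sum_range_succ' (fun j => rodriguesCoeff m n j • T j),
      Finset.sum_range_succ, rodriguesCoeff_of_lt_right (Nat.lt_succ_self n), zero_smul, add_zero]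
  have hnext : rodriguesSum m (n + 1) p = ∑ j ∈ Finset.range (n + 1),
      rodriguesCoeff m (n + 1) (j + 1) • T (j + 1) + rodriguesCoeff m (n + 1) 0 • T 0 :=
    Finset.sum_range_succ' _ _
  rw [hderiv, hnext, rodriguesCoeff_succ_zero]
  simp only [rodriguesCoeff_succ_succ, sub_smul, Finset.sum_sub_distrib, neg_smul]
  rw [hshift]
  abel

theorem iterate_sliceDeriv_gaussMonomial (m n : ℕ) :
    (sliceDeriv I)^[n] (gaussMonomial m 0) = rodriguesSum m n := by
  induction n with
  | zero => funext p; simp [rodriguesSum, rodriguesCoeff]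
  | succ n ih =>
    rw [Function.iterate_succ_apply', ih]
    exact funext (sliceDeriv_rodriguesSum m n)

theorem smul_rodriguesSum (m n : ℕ) (p : ℝ × ℝ) :
    ((-1) ^ n * Real.exp (p.1 ^ 2 + p.2 ^ 2)) • rodriguesSum m n p =
      (m.factorial * n.factorial : ℝ) • ∑ j ∈ Finset.range (min m n + 1),
        ((-1) ^ j / (j.factorial * (m - j).factorial * (n - j).factorial : ℝ)) •
          (zCoord p ^ (m - j) * zbarCoord p ^ (n - j)) := by
  have hterm (j : ℕ) : ((-1) ^ n * Real.exp (p.1 ^ 2 + p.2 ^ 2)) •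
      (rodriguesCoeff m n j • gaussMonomial (m - j) (n - j) p) =
        ((-1) ^ n * rodriguesCoeff m n j) • (zCoord p ^ (m - j) * zbarCoord p ^ (n - j)) := by
    rw [smul_smul, mul_right_comm, mul_smul, exp_smul_gaussMonomial]
  have hrange : Finset.range (min m n + 1) ⊆ Finset.range (n + 1) :=
    Finset.range_subset_range.mpr (by omega)
  rw [rodriguesSum, Finset.smul_sum, Finset.sum_congr rfl fun j _ => hterm j,
    ← Finset.sum_subset hrange, Finset.smul_sum]
  · refine Finset.sum_congr rfl fun j hj => ?_
    have hj' : j ≤ min m n := Nat.lt_succ_iff.mp (Finset.mem_range.mp hj)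
    rw [smul_smul, neg_one_pow_mul_rodriguesCoeff (by omega) (by omega)]
  · intro j hj hj'
    simp only [Finset.mem_range] at hj hj'
    rw [rodriguesCoeff_of_lt_left (by omega), mul_zero, zero_smul]

theorem liftAux_ofReal {I : ℍ[ℝ]} (hI : I * I = -1) (r : ℝ) :
    liftAux I hI r = (r : ℍ[ℝ]) := by
  simp

theorem liftAux_zCoord {I : ℍ[ℝ]} (hI : I * I = -1) (p : ℝ × ℝ) :
    liftAux I hI (zCoord p) = (p.1 : ℍ[ℝ]) + I * (p.2 : ℍ[ℝ]) := by
  rw [zCoord_apply, map_add, map_mul, liftAux_apply_I, liftAux_ofReal, liftAux_ofReal]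

theorem liftAux_zbarCoord {I : ℍ[ℝ]} (hI : I * I = -1) (p : ℝ × ℝ) :
    liftAux I hI (zbarCoord p) = (p.1 : ℍ[ℝ]) - I * (p.2 : ℍ[ℝ]) := by
  rw [zbarCoord_apply, map_sub, map_mul, liftAux_apply_I, liftAux_ofReal, liftAux_ofReal]

theorem liftAux_gaussMonomial {I : ℍ[ℝ]} (hI : I * I = -1) (a b : ℕ) (p : ℝ × ℝ) :
    liftAux I hI (gaussMonomial a b p) =
      (Real.exp (-(p.1 ^ 2 + p.2 ^ 2)) : ℍ[ℝ]) * ((p.1 : ℍ[ℝ]) + I * (p.2 : ℍ[ℝ])) ^ a *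
        ((p.1 : ℍ[ℝ]) - I * (p.2 : ℍ[ℝ])) ^ b := by
  rw [gaussMonomial, gaussian_eq_ofReal, map_mul, map_mul, map_pow, map_pow, liftAux_ofReal,
    liftAux_zCoord, liftAux_zbarCoord]

end QuaternionHermite

open QuaternionHermite

/-- Rodrigues-type formula
`(−1)^n e^{x²+y²} (∂_I)^n (e^{−(x²+y²)}(x+Iy)^m) = H^Q_{m,n}(x+Iy, x−Iy)`. -/
theorem stmt3 (m n : ℕ) (I : ℍ[ℝ]) (hI : I * I = -1) :
    ContDiff ℝ (⊤ : ℕ∞)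
        (fun p : ℝ × ℝ =>
          ((Real.exp (-(p.1 ^ 2 + p.2 ^ 2)) : ℝ) : ℍ[ℝ]) *
            ((p.1 : ℍ[ℝ]) + I * (p.2 : ℍ[ℝ])) ^ m) ∧
      ∀ x y : ℝ,
        ((-1 : ℝ) ^ n * Real.exp (x ^ 2 + y ^ 2)) •
            (dop I)^[n]
              (fun p : ℝ × ℝ =>
                ((Real.exp (-(p.1 ^ 2 + p.2 ^ 2)) : ℝ) : ℍ[ℝ]) *
                  ((p.1 : ℍ[ℝ]) + I * (p.2 : ℍ[ℝ])) ^ m) (x, y) =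
          HQ m n ((x : ℍ[ℝ]) + I * (y : ℍ[ℝ])) ((x : ℍ[ℝ]) - I * (y : ℍ[ℝ])) := by
  have hg : (fun p : ℝ × ℝ => ((Real.exp (-(p.1 ^ 2 + p.2 ^ 2)) : ℝ) : ℍ[ℝ]) *
      ((p.1 : ℍ[ℝ]) + I * (p.2 : ℍ[ℝ])) ^ m) =
        fun p => Complex.liftAux I hI (gaussMonomial m 0 p) := by
    funext p
    rw [liftAux_gaussMonomial, pow_zero, mul_one]
  have hdop : dop I = sliceDeriv (Complex.liftAux I hI Complex.I) := by
    rw [Complex.liftAux_apply_I, dop_eq_sliceDeriv]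
  have hsmooth := contDiff_gaussMonomial m 0
  rw [hg, hdop]
  refine ⟨(LinearMap.toContinuousLinearMap (Complex.liftAux I hI).toLinearMap).contDiff.comp
    hsmooth, fun x y => ?_⟩
  have hsum := smul_rodriguesSum m n (x, y)
  dsimp only at hsum
  rw [iterate_sliceDeriv_algHom_comp _ n hsmooth, iterate_sliceDeriv_gaussMonomial, ← map_smul,
    hsum, HQ, map_smul, map_sum]
  simp only [map_smul, map_mul, map_pow, liftAux_zCoord, liftAux_zbarCoord]
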